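/- arXiv:1903.10235 — 3 statements merged into one kernel-verified Lean document; each statement's English description precedes it below -/
import Mathlib

section
/- Let μ₁, μ₂ > 0, c_cm > 0, c_so > 0, τ > 0, p ∈ (0,1], and set E = e^{(μ₁+μ₂)τ}, K = μ₁c_cm/(μ₁+μ₂), and x = ((1-E)·K - c_so)/(1 - p - E). Then the following three statements are equivalent: (a) x > c_so/p; (b) x < K; (c) μ₁c_cm > (μ₁+μ₂)·c_so/p. -/
open Real Set

/-- With `E = e^{(μ₁+μ₂)τ}`, `K = μ₁ c_cm/(μ₁+μ₂)` and
`x = ((1-E)K - c_so)/(1-p-E)`, the statements (a) `x > c_so/p`, (b) `x < K`, and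
(c) `μ₁ c_cm > (μ₁+μ₂) c_so/p` are equivalent. -/
theorem stmt_6 (μ₁ μ₂ ccm cso τ p : ℝ) (hμ₁ : 0 < μ₁) (hμ₂ : 0 < μ₂) (hccm : 0 < ccm)
    (hcso : 0 < cso) (hτ : 0 < τ) (hp : p ∈ Set.Ioc (0:ℝ) 1)
    (E K x : ℝ)
    (hE : E = Real.exp ((μ₁ + μ₂) * τ))
    (hK : K = μ₁ * ccm / (μ₁ + μ₂))
    (hx : x = ((1 - E) * K - cso) / (1 - p - E)) :
    (x > cso / p ↔ x < K) ∧ (x < K ↔ μ₁ * ccm > (μ₁ + μ₂) * (cso / p)) := by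
  obtain ⟨hp0, hp1⟩ := hp
  have hsum : 0 < μ₁ + μ₂ := by linarith
  have hE1 : 1 < E := by
    rw [hE]
    have : (0:ℝ) < (μ₁ + μ₂) * τ := mul_pos hsum hτ
    calc (1:ℝ) = Real.exp 0 := by simp
    _ < Real.exp ((μ₁ + μ₂) * τ) := Real.exp_lt_exp.mpr this
  have hd : 1 - p - E < 0 := by linarith
  set q := cso / p with hq
  have hq0 : 0 < q := div_pos hcso hp0
  -- (b) ↔ q < K
  have hb : x < K ↔ q < K := by
    rw [hx, div_lt_iff_of_neg hd, hq, div_lt_iff₀ hp0]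
    constructor <;> intro h <;> nlinarith
  -- (a) ↔ q < K
  have hqp : q * p = cso := by rw [hq]; exact div_mul_cancel₀ cso hp0.ne'
  have ha : x > cso / p ↔ q < K := by
    rw [hx, gt_iff_lt, lt_div_iff_of_neg hd, ← hq]
    constructor <;> intro h <;> nlinarith [mul_pos (sub_pos.mpr hE1) hq0, hqp, hE1]
  -- (c) ↔ q < K
  have hc : μ₁ * ccm > (μ₁ + μ₂) * (cso / p) ↔ q < K := by
    rw [hK, ← hq, lt_div_iff₀ hsum, gt_iff_lt, mul_comm]
  rw [ha, hb, hc]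
  exact ⟨Iff.rfl, Iff.rfl⟩
end

section
/- Let μ₁, μ₂, τ > 0 and p ∈ (0,1]. The function p₁ : [0,τ] → ℝ defined by p₁(t) = (μ₂/(μ₁+μ₂))·(1 - p·e^{(μ₁+μ₂)t}/(e^{(μ₁+μ₂)τ} - 1 + p)) satisfies p₁'(t) = (μ₁+μ₂)·p₁(t) - μ₂ for every t ∈ (0,τ), and satisfies the boundary condition (1-p)·p₁(0) = p₁(τ). -/
open Real Set

/-- In the case of only scheduled opportunities, the function
`p₁(t) = (μ₂/(μ₁+μ₂))(1 - p e^{(μ₁+μ₂)t}/(e^{(μ₁+μ₂)τ} - 1 + p))` satisfies the ODE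
`p₁'(t) = (μ₁+μ₂) p₁(t) - μ₂` on `(0,τ)` and the boundary condition
`(1-p) p₁(0) = p₁(τ)`. -/
theorem stmt_11 (μ₁ μ₂ τ p : ℝ) (hμ₁ : 0 < μ₁) (hμ₂ : 0 < μ₂) (hτ : 0 < τ)
    (hp : p ∈ Set.Ioc (0:ℝ) 1)
    (p₁ : ℝ → ℝ)
    (hp₁ : ∀ t, p₁ t = μ₂ / (μ₁ + μ₂) *
      (1 - p * Real.exp ((μ₁ + μ₂) * t) / (Real.exp ((μ₁ + μ₂) * τ) - 1 + p))) :
    (∀ t ∈ Set.Ioo 0 τ, HasDerivAt p₁ ((μ₁ + μ₂) * p₁ t - μ₂) t) ∧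
    (1 - p) * p₁ 0 = p₁ τ := by
  obtain ⟨hp0, hp1⟩ := hp
  set c := μ₁ + μ₂ with hc
  have hcpos : 0 < c := by positivity
  set D := Real.exp (c * τ) - 1 + p with hD
  have hDpos : 0 < D := by
    have h1 : (1:ℝ) < Real.exp (c * τ) := by
      have := Real.exp_lt_exp.mpr (show (0:ℝ) < c * τ by positivity)
      simpa using this
    simp only [hD]; linarith
  have hfun : p₁ = fun t => μ₂ / c * (1 - p * Real.exp (c * t) / D) := funext hp₁
  subst hfun
  constructor
  · intro t ht
    have h1 : HasDerivAt (fun t => Real.exp (c * t)) (Real.exp (c * t) * c) t := by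
      simpa [Function.comp_def] using (Real.hasDerivAt_exp (c * t)).comp t
        ((hasDerivAt_id t).const_mul c)
    have h2 : HasDerivAt (fun t => μ₂ / c * (1 - p * Real.exp (c * t) / D))
        (μ₂ / c * (-(p * (Real.exp (c * t) * c) / D))) t := by
      exact (((h1.const_mul p).div_const D).const_sub 1).const_mul (μ₂ / c)
    convert h2 using 1
    field_simp
    ring
  · simp only
    have hDne : D ≠ 0 := ne_of_gt hDpos
    have hcne : c ≠ 0 := ne_of_gt hcpos
    rw [mul_zero, Real.exp_zero]
    field_simp
    ring_nf
    rw [hD]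
    ring
end

section
/- Let μ₁, μ₂, λ, τ > 0 and 0 < t̃ < τ. Define p₁ : [0,τ) → ℝ by p₁(t) = μ₂/(μ₁+μ₂) + (μ₂/(λ+μ₁+μ₂) - μ₂/(μ₁+μ₂) - (μ₂/(λ+μ₁+μ₂))·e^{(λ+μ₁+μ₂)(t̃-τ)})·e^{(μ₁+μ₂)(t-t̃)} for t ∈ [0,t̃), and p₁(t) = (μ₂/(λ+μ₁+μ₂))·(1 - e^{(λ+μ₁+μ₂)(t-τ)}) for t ∈ [t̃,τ). Then: (a) p₁'(t) = (μ₁+μ₂)·p₁(t) - μ₂ for t ∈ (0,t̃); (b) p₁'(t) = (μ₁+μ₂+λ)·p₁(t) - μ₂ for t ∈ (t̃,τ); (c) lim_{t→t̃⁻} p₁(t) = p₁(t̃); (d) lim_{t→τ⁻} p₁(t) = 0. -/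
open Real Set Filter Topology

/-- In the case of perfect maintenance (`p = 1`), the piecewise function
`p₁` satisfies (a) `p₁' = (μ₁+μ₂) p₁ - μ₂` on `(0,t̃)`, (b) `p₁' = (μ₁+μ₂+λ) p₁ - μ₂` on
`(t̃,τ)`, (c) continuity at `t̃` from the left, and (d) `lim_{t→τ⁻} p₁(t) = 0`. -/
theorem stmt_12 (μ₁ μ₂ lam τ tt : ℝ)
    (hμ₁ : 0 < μ₁) (hμ₂ : 0 < μ₂) (hlam : 0 < lam) (hτ : 0 < τ)
    (htt0 : 0 < tt) (httτ : tt < τ)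
    (p₁ : ℝ → ℝ)
    (hp₁ : ∀ t, p₁ t =
      if t < tt then
        μ₂ / (μ₁ + μ₂) +
          (μ₂ / (lam + μ₁ + μ₂) - μ₂ / (μ₁ + μ₂)
            - μ₂ / (lam + μ₁ + μ₂) * Real.exp ((lam + μ₁ + μ₂) * (tt - τ)))
            * Real.exp ((μ₁ + μ₂) * (t - tt))
      else μ₂ / (lam + μ₁ + μ₂) * (1 - Real.exp ((lam + μ₁ + μ₂) * (t - τ)))) :
    (∀ t ∈ Set.Ioo 0 tt, HasDerivAt p₁ ((μ₁ + μ₂) * p₁ t - μ₂) t) ∧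
    (∀ t ∈ Set.Ioo tt τ, HasDerivAt p₁ ((μ₁ + μ₂ + lam) * p₁ t - μ₂) t) ∧
    Filter.Tendsto p₁ (nhdsWithin tt (Set.Iio tt)) (nhds (p₁ tt)) ∧
    Filter.Tendsto p₁ (nhdsWithin τ (Set.Iio τ)) (nhds 0) := by
  have hμ : (0:ℝ) < μ₁ + μ₂ := by linarith
  have hL : (0:ℝ) < lam + μ₁ + μ₂ := by linarith
  set C : ℝ := μ₂ / (lam + μ₁ + μ₂) - μ₂ / (μ₁ + μ₂)
      - μ₂ / (lam + μ₁ + μ₂) * Real.exp ((lam + μ₁ + μ₂) * (tt - τ)) with hC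
  set f : ℝ → ℝ := fun t => μ₂ / (μ₁ + μ₂) + C * Real.exp ((μ₁ + μ₂) * (t - tt)) with hf
  set g : ℝ → ℝ := fun t => μ₂ / (lam + μ₁ + μ₂) * (1 - Real.exp ((lam + μ₁ + μ₂) * (t - τ)))
    with hg
  have hfd : ∀ t : ℝ, HasDerivAt f (C * ((μ₁ + μ₂) * Real.exp ((μ₁ + μ₂) * (t - tt)))) t := by
    intro t
    have h1 : HasDerivAt (fun s : ℝ => (μ₁ + μ₂) * (s - tt)) (μ₁ + μ₂) t := by
      simpa using (((hasDerivAt_id t).sub_const tt).const_mul (μ₁ + μ₂))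
    have h2 := (h1.exp).const_mul C
    simpa [hf, mul_comm] using (h2.const_add (μ₂ / (μ₁ + μ₂)))
  have hgd : ∀ t : ℝ, HasDerivAt g
      (μ₂ / (lam + μ₁ + μ₂) * (-( (lam + μ₁ + μ₂) * Real.exp ((lam + μ₁ + μ₂) * (t - τ))))) t := by
    intro t
    have h1 : HasDerivAt (fun s : ℝ => (lam + μ₁ + μ₂) * (s - τ)) (lam + μ₁ + μ₂) t := by
      simpa using (((hasDerivAt_id t).sub_const τ).const_mul (lam + μ₁ + μ₂))
    have h2 := ((hasDerivAt_const t (1:ℝ)).sub h1.exp).const_mul (μ₂ / (lam + μ₁ + μ₂))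
    simpa [hg, mul_comm] using h2
  refine ⟨?_, ?_, ?_, ?_⟩
  · intro t ht
    have heq : p₁ =ᶠ[𝓝 t] f := by
      filter_upwards [Iio_mem_nhds ht.2] with s hs
      rw [hp₁ s, if_pos (show s < tt from hs)]
    convert (hfd t).congr_of_eventuallyEq heq using 1
    case e'_4 => rfl
    case e'_5 => rfl
    rw [hp₁ t, if_pos ht.2]
    field_simp
    ring
  · intro t ht
    have heq : p₁ =ᶠ[𝓝 t] g := by
      filter_upwards [Ioi_mem_nhds ht.1] with s hs
      rw [hp₁ s, if_neg (not_lt.2 (le_of_lt hs))]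
    convert (hgd t).congr_of_eventuallyEq heq using 1
    case e'_4 => rfl
    case e'_5 => rfl
    rw [hp₁ t, if_neg (not_lt.2 (le_of_lt ht.1))]
    field_simp
    ring
  · have hcf : Tendsto f (𝓝[<] tt) (𝓝 (f tt)) :=
      ((hfd tt).continuousAt.tendsto).mono_left nhdsWithin_le_nhds
    have heq : p₁ =ᶠ[𝓝[<] tt] f := by
      filter_upwards [self_mem_nhdsWithin] with s hs
      rw [hp₁ s, if_pos (show s < tt from hs)]
    have hval : f tt = p₁ tt := by
      rw [hp₁ tt, if_neg (lt_irrefl tt)]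
      simp only [hf, hC, sub_self, mul_zero, Real.exp_zero, mul_one]
      field_simp
      ring
    rw [← hval]
    exact hcf.congr' heq.symm
  · have hcg : Tendsto g (𝓝[<] τ) (𝓝 (g τ)) :=
      ((hgd τ).continuousAt.tendsto).mono_left nhdsWithin_le_nhds
    have heq : p₁ =ᶠ[𝓝[<] τ] g := by
      filter_upwards [Ioo_mem_nhdsLT_of_mem ⟨httτ, le_refl τ⟩] with s hs
      rw [hp₁ s, if_neg (not_lt.2 (le_of_lt hs.1))]
    have hval : g τ = 0 := by simp [hg]
    rw [← hval]
    exact hcg.congr' heq.symm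
end
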